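/- arXiv:2307.00144 — 4 statements merged into one kernel-verified Lean document; each statement's English description precedes it below -/
import Mathlib

section
/- Let θ(t) = (U₁(t), …, U_q(t)) with Uᵢ(t) ∈ ℝ^{n_{i−1}×n_i} be a differentiable curve satisfying a gradient flow θ'(t) = −∇E(θ(t)) where E(θ) = L(U₁⋯U_q) for some differentiable L : ℝ^{n₀×n_q} → ℝ. Then for each i = 1, …, q−1, the matrix-valued function t ↦ Uᵢ(t)ᵀUᵢ(t) − U_{i+1}(t)U_{i+1}(t)ᵀ is constant in t. -/
open Matrix

/-!
Differentiating `Uᵢᵀ Uᵢ` along the flow gives `-(Uᵢᵀ Pᵢᵀ ∇L Sᵢ₊₁ᵀ + its transpose)`, where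
`Pᵢ = U₁⋯Uᵢ₋₁` and `Sᵢ₊₁ = Uᵢ₊₁⋯U_q`. Since `PᵢUᵢ = Pᵢ₊₁` and `Sᵢ₊₁ = Uᵢ₊₁Sᵢ₊₂`, the same
expression is the derivative of `Uᵢ₊₁Uᵢ₊₁ᵀ`, so the difference has zero derivative.
-/

lemma hasDerivAt_matrix_mul_apply {m n p : Type*} [Fintype n] {t : ℝ}
    {A : ℝ → Matrix m n ℝ} {B : ℝ → Matrix n p ℝ} {A' : Matrix m n ℝ} {B' : Matrix n p ℝ}
    (hA : ∀ i j, HasDerivAt (fun s => A s i j) (A' i j) t)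
    (hB : ∀ j k, HasDerivAt (fun s => B s j k) (B' j k) t) (i : m) (k : p) :
    HasDerivAt (fun s => (A s * B s) i k) ((A' * B t + A t * B') i k) t := by
  simpa only [mul_apply, Matrix.add_apply, Finset.sum_add_distrib] using
    HasDerivAt.fun_sum (u := Finset.univ) fun j _ => (hA i j).fun_mul (hB j k)

theorem transpose_mul_self_sub_mul_transpose_eq {m n p : Type*} [Fintype m] [Fintype p]
    {A A' : ℝ → Matrix m n ℝ} {B B' : ℝ → Matrix n p ℝ}
    (hA : ∀ t i j, HasDerivAt (fun s => A s i j) (A' t i j) t)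
    (hB : ∀ t j k, HasDerivAt (fun s => B s j k) (B' t j k) t)
    (hbal : ∀ t, (A' t)ᵀ * A t + (A t)ᵀ * A' t = B' t * (B t)ᵀ + B t * (B' t)ᵀ) (t s : ℝ) :
    (A t)ᵀ * A t - B t * (B t)ᵀ = (A s)ᵀ * A s - B s * (B s)ᵀ := by
  ext a b
  have hderiv : ∀ r, HasDerivAt (fun s => ((A s)ᵀ * A s - B s * (B s)ᵀ) a b) 0 r := by
    intro r
    have hAA := hasDerivAt_matrix_mul_apply (A := fun s => (A s)ᵀ) (A' := (A' r)ᵀ)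
      (fun i j => hA r j i) (hA r) a b
    have hBB := hasDerivAt_matrix_mul_apply (B := fun s => (B s)ᵀ) (B' := (B' r)ᵀ)
      (hB r) (fun j k => hB r k j) a b
    simpa only [Matrix.sub_apply, hbal r, sub_self] using hAA.fun_sub hBB
  exact is_const_of_deriv_eq_zero (fun r => (hderiv r).differentiableAt)
    (fun r => (hderiv r).deriv) t s

lemma layer_gradient_balance {R k l m o r : Type*} [CommRing R] [Fintype k] [Fintype l]
    [Fintype o] [Fintype r] (P : Matrix k l R) (U : Matrix l m R) (G : Matrix k r R)
    (V : Matrix m o R) (S : Matrix o r R) :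
    (-(Pᵀ * G * (V * S)ᵀ))ᵀ * U + Uᵀ * -(Pᵀ * G * (V * S)ᵀ)
      = -((P * U)ᵀ * G * Sᵀ) * Vᵀ + V * (-((P * U)ᵀ * G * Sᵀ))ᵀ := by
  simp only [transpose_neg, transpose_mul, transpose_transpose, Matrix.neg_mul,
    Matrix.mul_neg, Matrix.mul_assoc]
  exact add_comm _ _

theorem stmt5_general (q : ℕ) (n : ℕ → ℕ)
    (U : ℝ → ∀ i : ℕ, Matrix (Fin (n i)) (Fin (n (i + 1))) ℝ)
    (G : ℝ → Matrix (Fin (n 0)) (Fin (n q)) ℝ)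
    (Pre : ℝ → ∀ i : ℕ, Matrix (Fin (n 0)) (Fin (n i)) ℝ)
    (Suf : ℝ → ∀ i : ℕ, Matrix (Fin (n i)) (Fin (n q)) ℝ)
    (hPre : ∀ t, ∀ i < q, Pre t (i + 1) = Pre t i * U t i)
    (hSuf : ∀ t, ∀ i < q, Suf t i = U t i * Suf t (i + 1))
    (hflow : ∀ t, ∀ i < q, ∀ a b,
        HasDerivAt (fun s => U s i a b)
          ((-((Pre t i)ᵀ * G t * (Suf t (i + 1))ᵀ)) a b) t) :
    ∀ i, i + 1 < q → ∀ t s : ℝ,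
      (U t i)ᵀ * U t i - U t (i + 1) * (U t (i + 1))ᵀ
        = (U s i)ᵀ * U s i - U s (i + 1) * (U s (i + 1))ᵀ := by
  intro i hi
  refine transpose_mul_self_sub_mul_transpose_eq (fun t => hflow t i (by omega))
    (fun t => hflow t (i + 1) hi) fun t => ?_
  rw [hSuf t (i + 1) hi, hPre t i (by omega)]
  exact layer_gradient_balance _ _ _ _ _

/-- For a linear network `E(θ) = L(U₁⋯U_q)`, along any gradient flow
`θ' = -∇E(θ)` (whose gradient in `Uᵢ` is `(U₁⋯U_{i-1})ᵀ ∇L(U₁⋯U_q) (U_{i+1}⋯U_q)ᵀ`),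
the quantities `Uᵢᵀ Uᵢ - U_{i+1} U_{i+1}ᵀ` are constant in time, for `i = 1, …, q-1`
(layers are indexed from `0` below).  `Pre t i` is the prefix product `U₁⋯Uᵢ` at time `t`,
`Suf t i` the suffix product `U_{i+1}⋯U_q`, and `G t` is the gradient `∇L` at the full
product, characterized entrywise by directional derivatives of `L`. -/
theorem stmt5 (q : ℕ) (n : ℕ → ℕ)
    (L : Matrix (Fin (n 0)) (Fin (n q)) ℝ → ℝ)
    (U : ℝ → ∀ i : ℕ, Matrix (Fin (n i)) (Fin (n (i + 1))) ℝ)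
    (G : ℝ → Matrix (Fin (n 0)) (Fin (n q)) ℝ)
    (Pre : ℝ → ∀ i : ℕ, Matrix (Fin (n 0)) (Fin (n i)) ℝ)
    (Suf : ℝ → ∀ i : ℕ, Matrix (Fin (n i)) (Fin (n q)) ℝ)
    (hPre0 : ∀ t, Pre t 0 = 1)
    (hPre : ∀ t, ∀ i < q, Pre t (i + 1) = Pre t i * U t i)
    (hSufq : ∀ t, Suf t q = 1)
    (hSuf : ∀ t, ∀ i < q, Suf t i = U t i * Suf t (i + 1))
    (hG : ∀ t a b, HasDerivAt (fun s : ℝ => L (Pre t q + s • Matrix.single a b 1))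
        (G t a b) 0)
    (hflow : ∀ t, ∀ i < q, ∀ a b,
        HasDerivAt (fun s => U s i a b)
          ((-((Pre t i)ᵀ * G t * (Suf t (i + 1))ᵀ)) a b) t) :
    ∀ i, i + 1 < q → ∀ t s : ℝ,
      (U t i)ᵀ * U t i - U t (i + 1) * (U t (i + 1))ᵀ
        = (U s i)ᵀ * U s i - U s (i + 1) * (U s (i + 1))ᵀ :=
  stmt5_general q n U G Pre Suf hPre hSuf hflow
end

section
/- Let q = 2 and θ = (U, V) with U ∈ ℝ^{n×r}, V ∈ ℝ^{m×r}. Consider Ψ(U,V) = UᵀU − VᵀV ∈ ℝ^{r×r}, a symmetric-matrix-valued function. If the vertical concatenation (U;V) ∈ ℝ^{(n+m)×r} has rank rk, then the gradients of the entries Ψ_{i,j} for i ≤ j span a subspace of ℝ^{(n+m)r} of dimension rk·(2r + 1 − rk)/2; i.e., Ψ yields exactly rk(2r+1−rk)/2 independent conservation laws. -/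
set_option maxHeartbeats 1000000
set_option synthInstance.maxHeartbeats 400000

lemma arith6 (r k : ℕ) (hk : k ≤ r) :
    r*(r+1)/2 - (r-k)*((r-k)+1)/2 = k*(2*r+1-k)/2 := by
  have h1 : Even ((r-k)*((r-k)+1)) := Nat.even_mul_succ_self _
  have h2 : Even (r*(r+1)) := Nat.even_mul_succ_self _
  have h3 : (r-k)*((r-k)+1) ≤ r*(r+1) := Nat.mul_le_mul (by omega) (by omega)
  have key : r*(r+1) - (r-k)*((r-k)+1) = k*(2*r+1-k) := by
    zify [hk, h3, show k ≤ 2*r+1 by omega]; ring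
  obtain ⟨a, ha⟩ := h1; obtain ⟨b, hb⟩ := h2
  omega

def pairsEquiv (w : ℕ) : {p : Fin w × Fin w // p.1 ≤ p.2} ≃ Σ j : Fin w, Fin (j.1+1) where
  toFun p := ⟨p.1.2, ⟨p.1.1.1, by have := p.2; rw [Fin.le_def] at this; omega⟩⟩
  invFun s := ⟨(⟨⟨s.2.1, by have := s.2.isLt; have := s.1.isLt; omega⟩, s.1⟩), by
    rw [Fin.le_def]; have := s.2.isLt; simp; omega⟩
  left_inv p := by ext <;> rfl
  right_inv s := by ext <;> rfl

lemma card_pairs (w : ℕ) : Fintype.card {p : Fin w × Fin w // p.1 ≤ p.2} = w*(w+1)/2 := by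
  rw [Fintype.card_congr (pairsEquiv w), Fintype.card_sigma]
  simp only [Fintype.card_fin]
  rw [Fin.sum_univ_eq_sum_range (fun i => i + 1) w]
  have h : (∑ i ∈ Finset.range (w+1), i) * 2 = (w+1)*w := Finset.sum_range_id_mul_two (w+1)
  have h2 : ∑ i ∈ Finset.range w, (i+1) = ∑ i ∈ Finset.range (w+1), i := by
    rw [Finset.sum_range_succ']; simp
  rw [h2]
  have h3 : (w+1)*w = w*(w+1) := by ring
  omega

open Matrix

variable {r : ℕ}

/-- Symmetric matrices with all columns in a submodule `W`. -/
def symW (W : Submodule ℝ (Fin r → ℝ)) : Submodule ℝ (Matrix (Fin r) (Fin r) ℝ) where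
  carrier := {M | M.IsSymm ∧ ∀ j, (fun i => M i j) ∈ W}
  add_mem' := by
    rintro M N ⟨hM, hM2⟩ ⟨hN, hN2⟩
    exact ⟨hM.add hN, fun j => W.add_mem (hM2 j) (hN2 j)⟩
  zero_mem' := ⟨Matrix.isSymm_zero, fun j => W.zero_mem⟩
  smul_mem' := by
    rintro c M ⟨hM, hM2⟩
    refine ⟨hM.smul c, fun j => ?_⟩
    exact W.smul_mem c (hM2 j)

/-- All symmetric matrices. -/
def symAll (w : ℕ) : Submodule ℝ (Matrix (Fin w) (Fin w) ℝ) := symW ⊤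

lemma mem_symW {W : Submodule ℝ (Fin r → ℝ)} {M : Matrix (Fin r) (Fin r) ℝ} :
    M ∈ symW W ↔ M.IsSymm ∧ ∀ j, (fun i => M i j) ∈ W := Iff.rfl

lemma mem_symAll {w : ℕ} {M : Matrix (Fin w) (Fin w) ℝ} : M ∈ symAll w ↔ M.IsSymm := by
  simp [symAll, mem_symW]

/-- Linear equivalence between symmetric matrices and functions on ordered pairs. -/
noncomputable def symAllEquiv (w : ℕ) :
    symAll w ≃ₗ[ℝ] ({p : Fin w × Fin w // p.1 ≤ p.2} → ℝ) where
  toFun M := fun p => M.1 p.1.1 p.1.2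
  map_add' M N := rfl
  map_smul' c M := rfl
  invFun f := ⟨Matrix.of fun i j =>
      if h : i ≤ j then f ⟨(i,j), h⟩ else f ⟨(j,i), le_of_not_ge h⟩, by
    rw [mem_symAll]
    unfold Matrix.IsSymm
    ext i j
    simp only [Matrix.transpose_apply, Matrix.of_apply]
    by_cases h1 : j ≤ i <;> by_cases h2 : i ≤ j <;> simp [h1, h2]
    · have : i = j := le_antisymm h2 h1
      subst this; rfl
    · exact absurd (le_total j i) (by simp [h1, h2])⟩
  left_inv M := by
    apply Subtype.ext
    ext i j
    by_cases h : i ≤ j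
    · simp [Matrix.of_apply, h]
    · simp only [Matrix.of_apply, dif_neg h]
      have hs : (M.1)ᵀ = M.1 := (mem_symAll.1 M.2)
      exact congrFun (congrFun hs i) j
  right_inv f := by
    ext p
    have := p.2
    simp [Matrix.of_apply, this]

lemma finrank_symAll (w : ℕ) : Module.finrank ℝ (symAll w) = w*(w+1)/2 := by
  rw [(symAllEquiv w).finrank_eq, Module.finrank_pi, card_pairs]

section Core

variable {r : ℕ} (W : Submodule ℝ (Fin r → ℝ))

local notation "w" => Module.finrank ℝ W

/-- matrix whose columns are a basis of `W`. -/
noncomputable def Bmat : Matrix (Fin r) (Fin (Module.finrank ℝ W)) ℝ :=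
  Matrix.of fun i k => (Module.finBasis ℝ W k : Fin r → ℝ) i

lemma Bmat_mulVec (x : Fin (Module.finrank ℝ W) → ℝ) :
    Bmat W *ᵥ x = ((∑ k, x k • Module.finBasis ℝ W k : W) : Fin r → ℝ) := by
  have hc : ((∑ k, x k • Module.finBasis ℝ W k : W) : Fin r → ℝ)
      = ∑ k, x k • ((Module.finBasis ℝ W k : Fin r → ℝ)) := by
    rw [Submodule.coe_sum]; simp
  funext i
  simp [Matrix.mulVec, dotProduct, Bmat, hc, Finset.sum_apply, mul_comm]

lemma Bmat_mulVec_mem (x : Fin (Module.finrank ℝ W) → ℝ) : Bmat W *ᵥ x ∈ W := by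
  rw [Bmat_mulVec]; exact Submodule.coe_mem _

lemma Bmat_mulVec_injective : Function.Injective ((Bmat W).mulVec) := by
  have h : ∀ x, Bmat W *ᵥ x = 0 → x = 0 := by
    intro x hx
    rw [Bmat_mulVec] at hx
    have : (∑ k, x k • Module.finBasis ℝ W k : W) = 0 := by
      apply Subtype.ext; exact hx
    have := Fintype.linearIndependent_iff.mp (Module.finBasis ℝ W).linearIndependent x this
    funext k; exact this k
  intro x y hxy
  have : Bmat W *ᵥ (x - y) = 0 := by
    rw [Matrix.mulVec_sub, hxy, sub_self]
  have := h _ this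
  funext k; have := congrFun this k; simp at this; linarith [this]

lemma gram_isUnit : IsUnit ((Bmat W)ᵀ * Bmat W) := by
  apply Matrix.mulVec_injective_iff_isUnit.mp
  have h : ∀ x, ((Bmat W)ᵀ * Bmat W) *ᵥ x = 0 → x = 0 := by
    intro x hx
    have h1 : (Bmat W *ᵥ x) ⬝ᵥ (Bmat W *ᵥ x) = 0 := by
      have e1 : x ⬝ᵥ (((Bmat W)ᵀ * Bmat W) *ᵥ x) = 0 := by rw [hx, dotProduct_zero]
      rw [← Matrix.mulVec_mulVec, Matrix.dotProduct_mulVec, Matrix.vecMul_transpose] at e1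
      exact e1
    have h2 := dotProduct_self_eq_zero.mp h1
    exact Bmat_mulVec_injective W (by rw [h2, Matrix.mulVec_zero])
  intro x y hxy
  have : ((Bmat W)ᵀ * Bmat W) *ᵥ (x - y) = 0 := by rw [Matrix.mulVec_sub, hxy, sub_self]
  have := h _ this
  funext k; have := congrFun this k; simp at this; linarith [this]

/-- The conjugation map `N ↦ B N Bᵀ` from symmetric `w×w` matrices into `symW W`. -/
noncomputable def conjB : symAll (Module.finrank ℝ W) →ₗ[ℝ] Matrix (Fin r) (Fin r) ℝ where
  toFun N := Bmat W * N.1 * (Bmat W)ᵀ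
  map_add' N M := by simp [Matrix.mul_add, Matrix.add_mul]
  map_smul' c N := by simp [Matrix.mul_smul, Matrix.smul_mul]

lemma conjB_mem (N : symAll (Module.finrank ℝ W)) : conjB W N ∈ symW W := by
  constructor
  · have hN : (N.1)ᵀ = N.1 := mem_symAll.mp N.2
    show (Bmat W * N.1 * (Bmat W)ᵀ)ᵀ = Bmat W * N.1 * (Bmat W)ᵀ
    simp only [Matrix.transpose_mul, Matrix.transpose_transpose, hN, Matrix.mul_assoc]
  · intro j
    have hassoc : conjB W N = Bmat W * (N.1 * (Bmat W)ᵀ) := by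
      show Bmat W * N.1 * (Bmat W)ᵀ = _
      exact Matrix.mul_assoc _ _ _
    have hcol : (fun i => (Bmat W * (N.1 * (Bmat W)ᵀ)) i j)
        = Bmat W *ᵥ (fun k => (N.1 * (Bmat W)ᵀ) k j) := by
      funext i
      simp [Matrix.mul_apply, Matrix.mulVec, dotProduct]
    rw [hassoc, hcol]
    exact Bmat_mulVec_mem W _

lemma conjB_injective : Function.Injective (conjB W) := by
  have hG := gram_isUnit W
  have hGd := (Matrix.isUnit_iff_isUnit_det _).mp hG
  intro N M hNM
  apply Subtype.ext
  have h : Bmat W * N.1 * (Bmat W)ᵀ = Bmat W * M.1 * (Bmat W)ᵀ := hNM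
  have h2 : ((Bmat W)ᵀ * Bmat W) * N.1 * ((Bmat W)ᵀ * Bmat W)
      = ((Bmat W)ᵀ * Bmat W) * M.1 * ((Bmat W)ᵀ * Bmat W) := by
    calc ((Bmat W)ᵀ * Bmat W) * N.1 * ((Bmat W)ᵀ * Bmat W)
        = (Bmat W)ᵀ * (Bmat W * N.1 * (Bmat W)ᵀ) * Bmat W := by
          simp only [Matrix.mul_assoc]
      _ = (Bmat W)ᵀ * (Bmat W * M.1 * (Bmat W)ᵀ) * Bmat W := by rw [h]
      _ = ((Bmat W)ᵀ * Bmat W) * M.1 * ((Bmat W)ᵀ * Bmat W) := by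
          simp only [Matrix.mul_assoc]
  set G := (Bmat W)ᵀ * Bmat W with hGdef
  have cancel : ∀ X : Matrix (Fin (Module.finrank ℝ W)) (Fin (Module.finrank ℝ W)) ℝ,
      G⁻¹ * (G * X * G) * G⁻¹ = X := by
    intro X
    rw [show G * X * G = G * (X * G) from Matrix.mul_assoc _ _ _,
      ← Matrix.mul_assoc G⁻¹ G _, Matrix.nonsing_inv_mul _ hGd, Matrix.one_mul,
      Matrix.mul_assoc, Matrix.mul_nonsing_inv _ hGd, Matrix.mul_one]
  calc N.1 = G⁻¹ * (G * N.1 * G) * G⁻¹ := (cancel _).symm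
    _ = G⁻¹ * (G * M.1 * G) * G⁻¹ := by rw [h2]
    _ = M.1 := cancel _

lemma conjB_surjective (M : Matrix (Fin r) (Fin r) ℝ) (hM : M ∈ symW W) :
    ∃ N : symAll (Module.finrank ℝ W), conjB W N = M := by
  obtain ⟨hMs, hMc⟩ := hM
  have hG := gram_isUnit W
  have hGd := (Matrix.isUnit_iff_isUnit_det _).mp hG
  set B := Bmat W with hBdef
  set G := Bᵀ * B with hGdef
  -- M = B * K
  set K : Matrix (Fin (Module.finrank ℝ W)) (Fin r) ℝ :=
    Matrix.of fun k j => (Module.finBasis ℝ W).repr ⟨fun i => M i j, hMc j⟩ k with hKdef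
  have hBK : M = B * K := by
    funext i j
    have := (Module.finBasis ℝ W).sum_repr ⟨fun i => M i j, hMc j⟩
    have h2 : ((∑ k, ((Module.finBasis ℝ W).repr ⟨fun i => M i j, hMc j⟩ k)
        • Module.finBasis ℝ W k : W) : Fin r → ℝ) i = M i j := by rw [this]
    rw [← Bmat_mulVec W] at h2
    simpa [Matrix.mul_apply, Matrix.mulVec, dotProduct, K] using h2.symm
  -- G symmetric
  have hGsymm : Gᵀ = G := by simp [hGdef, Matrix.transpose_mul]
  have hGinvsymm : (G⁻¹)ᵀ = G⁻¹ := by rw [Matrix.transpose_nonsing_inv, hGsymm]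
  -- P := B * G⁻¹ * Bᵀ
  set P := B * G⁻¹ * Bᵀ with hPdef
  have hPM : P * M = M := by
    rw [hBK, hPdef]
    calc B * G⁻¹ * Bᵀ * (B * K) = B * G⁻¹ * (Bᵀ * B) * K := by simp only [Matrix.mul_assoc]
      _ = B * (G⁻¹ * G) * K := by rw [← hGdef]; simp only [Matrix.mul_assoc]
      _ = B * K := by rw [Matrix.nonsing_inv_mul _ hGd, Matrix.mul_one]
  have hPsymm : Pᵀ = P := by
    rw [hPdef]; simp [Matrix.transpose_mul, hGinvsymm, Matrix.mul_assoc]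
  have hMP : M * P = M := by
    have := congrArg Matrix.transpose hPM
    rw [Matrix.transpose_mul, hMs, hPsymm] at this
    exact this
  refine ⟨⟨G⁻¹ * Bᵀ * M * B * G⁻¹, ?_⟩, ?_⟩
  · rw [mem_symAll]
    show (G⁻¹ * Bᵀ * M * B * G⁻¹)ᵀ = _
    calc (G⁻¹ * Bᵀ * M * B * G⁻¹)ᵀ = (G⁻¹)ᵀ * Bᵀ * Mᵀ * B * (G⁻¹)ᵀ := by
          simp [Matrix.transpose_mul, Matrix.mul_assoc]
      _ = G⁻¹ * Bᵀ * M * B * G⁻¹ := by rw [hGinvsymm, hMs]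
  · show B * (G⁻¹ * Bᵀ * M * B * G⁻¹) * Bᵀ = M
    calc B * (G⁻¹ * Bᵀ * M * B * G⁻¹) * Bᵀ = (B * G⁻¹ * Bᵀ) * M * (B * G⁻¹ * Bᵀ) := by
          simp only [Matrix.mul_assoc]
      _ = M := by rw [← hPdef, hPM, hMP]

lemma finrank_symW : Module.finrank ℝ (symW W)
    = (Module.finrank ℝ W) * (Module.finrank ℝ W + 1) / 2 := by
  have hbij : Function.Bijective ((conjB W).codRestrict (symW W) (conjB_mem W)) := by
    constructor
    · intro N M h
      apply conjB_injective W
      have := congrArg Subtype.val h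
      exact this
    · rintro ⟨M, hM⟩
      obtain ⟨N, hN⟩ := conjB_surjective W M hM
      exact ⟨N, Subtype.ext hN⟩
  rw [← (LinearEquiv.ofBijective _ hbij).finrank_eq, finrank_symAll]

end Core


/-- The entries `Ψ_{i,j}(U,V) = ⟨Uᵢ, Uⱼ⟩ - ⟨Vᵢ, Vⱼ⟩` of `Ψ(U,V) = UᵀU - VᵀV`, where the
parameter `θ ∈ ℝ^{(n+m)r}` encodes the vertical concatenation `(U; V)` via
`θ (Sum.inl a, i) = U a i` and `θ (Sum.inr a, i) = V a i`. -/
noncomputable def Psi6 (n m r : ℕ) (i j : Fin r)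
    (θ : EuclideanSpace ℝ ((Fin n ⊕ Fin m) × Fin r)) : ℝ :=
  (∑ a : Fin n, θ (Sum.inl a, i) * θ (Sum.inl a, j))
    - ∑ a : Fin m, θ (Sum.inr a, i) * θ (Sum.inr a, j)

section Main

variable {n m r : ℕ}

/-- sign vector: +1 on the `U` block, -1 on the `V` block. -/
def sgn6 : Fin n ⊕ Fin m → ℝ := Sum.elim (fun _ => 1) (fun _ => -1)

/-- the gradient of `Psi6 n m r i j` at `θ`, as an explicit vector. -/
noncomputable def gvec6 (θ : EuclideanSpace ℝ ((Fin n ⊕ Fin m) × Fin r)) (i j : Fin r) :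
    EuclideanSpace ℝ ((Fin n ⊕ Fin m) × Fin r) :=
  (WithLp.equiv 2 _).symm fun p =>
    sgn6 p.1 * (θ (p.1, i) * (if p.2 = j then 1 else 0) + θ (p.1, j) * (if p.2 = i then 1 else 0))

lemma gvec6_apply (θ : EuclideanSpace ℝ ((Fin n ⊕ Fin m) × Fin r)) (i j : Fin r)
    (p : (Fin n ⊕ Fin m) × Fin r) :
    gvec6 θ i j p = sgn6 p.1 * (θ (p.1, i) * (if p.2 = j then 1 else 0)
      + θ (p.1, j) * (if p.2 = i then 1 else 0)) := rfl

lemma grad6 (θ : EuclideanSpace ℝ ((Fin n ⊕ Fin m) × Fin r)) (i j : Fin r) :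
    gradient (Psi6 n m r i j) θ = gvec6 θ i j := by
  classical
  have hfun : ∀ p : (Fin n ⊕ Fin m) × Fin r,
      (fun v : EuclideanSpace ℝ ((Fin n ⊕ Fin m) × Fin r) => v p)
        = ⇑(EuclideanSpace.proj (𝕜 := ℝ) p) :=
    fun p => funext fun v => (PiLp.proj_apply (𝕜 := ℝ) 2 _ p v).symm
  have hproj : ∀ p : (Fin n ⊕ Fin m) × Fin r,
      HasFDerivAt (fun v : EuclideanSpace ℝ ((Fin n ⊕ Fin m) × Fin r) => v p)
        (EuclideanSpace.proj (𝕜 := ℝ) p) θ := by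
    intro p
    rw [hfun p]
    exact (EuclideanSpace.proj (𝕜 := ℝ) p).hasFDerivAt
  have h1 : ∀ (p q : (Fin n ⊕ Fin m) × Fin r),
      HasFDerivAt (fun v : EuclideanSpace ℝ ((Fin n ⊕ Fin m) × Fin r) => v p * v q)
      (θ p • (EuclideanSpace.proj (𝕜 := ℝ) q) + θ q • (EuclideanSpace.proj (𝕜 := ℝ) p)) θ :=
    fun p q => (hproj p).mul (hproj q)
  set L : EuclideanSpace ℝ ((Fin n ⊕ Fin m) × Fin r) →L[ℝ] ℝ :=
      (∑ a : Fin n, (θ (Sum.inl a, i) • (EuclideanSpace.proj (𝕜 := ℝ) ((Sum.inl a : Fin n ⊕ Fin m), j))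
        + θ (Sum.inl a, j) • (EuclideanSpace.proj (𝕜 := ℝ) ((Sum.inl a : Fin n ⊕ Fin m), i))))
      - ∑ a : Fin m, (θ (Sum.inr a, i) • (EuclideanSpace.proj (𝕜 := ℝ) ((Sum.inr a : Fin n ⊕ Fin m), j))
        + θ (Sum.inr a, j) • (EuclideanSpace.proj (𝕜 := ℝ) ((Sum.inr a : Fin n ⊕ Fin m), i))) with hL
  have hF : HasFDerivAt (Psi6 n m r i j) L θ := by
    have hs1 : HasFDerivAt (fun v : EuclideanSpace ℝ ((Fin n ⊕ Fin m) × Fin r) =>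
        ∑ a : Fin n, v (Sum.inl a, i) * v (Sum.inl a, j))
        (∑ a : Fin n, (θ (Sum.inl a, i) • (EuclideanSpace.proj (𝕜 := ℝ) ((Sum.inl a : Fin n ⊕ Fin m), j))
          + θ (Sum.inl a, j) • (EuclideanSpace.proj (𝕜 := ℝ) ((Sum.inl a : Fin n ⊕ Fin m), i)))) θ := by
      apply HasFDerivAt.fun_sum
      intro a _
      exact h1 (Sum.inl a, i) (Sum.inl a, j)
    have hs2 : HasFDerivAt (fun v : EuclideanSpace ℝ ((Fin n ⊕ Fin m) × Fin r) =>
        ∑ a : Fin m, v (Sum.inr a, i) * v (Sum.inr a, j))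
        (∑ a : Fin m, (θ (Sum.inr a, i) • (EuclideanSpace.proj (𝕜 := ℝ) ((Sum.inr a : Fin n ⊕ Fin m), j))
          + θ (Sum.inr a, j) • (EuclideanSpace.proj (𝕜 := ℝ) ((Sum.inr a : Fin n ⊕ Fin m), i)))) θ := by
      apply HasFDerivAt.fun_sum
      intro a _
      exact h1 (Sum.inr a, i) (Sum.inr a, j)
    exact hs1.sub hs2
  have hG : HasGradientAt (Psi6 n m r i j)
      ((InnerProductSpace.toDual ℝ (EuclideanSpace ℝ ((Fin n ⊕ Fin m) × Fin r))).symm L) θ :=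
    (hasFDerivAt_iff_hasGradientAt).mp hF
  rw [hG.gradient]
  suffices hdual : (InnerProductSpace.toDual ℝ (EuclideanSpace ℝ ((Fin n ⊕ Fin m) × Fin r)))
      (gvec6 θ i j) = L by
    rw [← hdual, LinearIsometryEquiv.symm_apply_apply]
  ext v
  rw [InnerProductSpace.toDual_apply_apply]
  rw [PiLp.inner_apply]
  simp only [RCLike.inner_apply, starRingEnd_apply, star_trivial]
  rw [Fintype.sum_prod_type]
  rw [Fintype.sum_sum_type]
  simp only [gvec6_apply, sgn6, Sum.elim_inl, Sum.elim_inr, one_mul, neg_one_mul, neg_mul,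
    add_mul, ite_mul, zero_mul, mul_ite, mul_zero, mul_one, neg_add, Finset.sum_add_distrib,
    Finset.sum_neg_distrib, Finset.sum_ite_eq', Finset.mem_univ, if_true, hL,
    ContinuousLinearMap.sub_apply, ContinuousLinearMap.sum_apply, ContinuousLinearMap.add_apply,
    ContinuousLinearMap.smul_apply, PiLp.proj_apply, smul_eq_mul]
  simp only [mul_add, mul_neg, neg_add, mul_ite, mul_zero, Finset.sum_ite_eq', Finset.sum_ite_eq,
    Finset.mem_univ, if_true, Finset.sum_add_distrib, Finset.sum_neg_distrib]
  simp only [mul_comm (WithLp.ofLp v _)]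
  ring

end Main

section Final

variable {n m r : ℕ}

/-- identify the Euclidean parameter space with matrices -/
noncomputable def toMat6 :
    EuclideanSpace ℝ ((Fin n ⊕ Fin m) × Fin r) ≃ₗ[ℝ] Matrix (Fin n ⊕ Fin m) (Fin r) ℝ where
  toFun v := Matrix.of fun x k => v (x, k)
  map_add' _ _ := rfl
  map_smul' _ _ := rfl
  invFun M := (WithLp.equiv 2 _).symm fun p => M p.1 p.2
  left_inv _ := rfl
  right_inv _ := rfl

/-- symmetrized elementary matrices -/
def sE6 (i j : Fin r) : Matrix (Fin r) (Fin r) ℝ :=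
  Matrix.single i j 1 + Matrix.single j i 1

lemma std_transpose (i j : Fin r) :
    (Matrix.single i j (1:ℝ))ᵀ = Matrix.single j i 1 := by
  ext a b
  simp only [Matrix.transpose_apply, Matrix.single, Matrix.of_apply]
  by_cases h1 : i = b <;> by_cases h2 : j = a <;> simp [h1, h2] <;> tauto

lemma sE6_mem (i j : Fin r) : sE6 i j ∈ symAll r := by
  rw [mem_symAll]
  show (sE6 i j)ᵀ = sE6 i j
  rw [sE6, Matrix.transpose_add, std_transpose, std_transpose, add_comm]

lemma matrix_expand (M : Matrix (Fin r) (Fin r) ℝ) :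
    M = ∑ i, ∑ j, M i j • Matrix.single i j (1:ℝ) := by
  conv_lhs => rw [Matrix.matrix_eq_sum_single M]
  refine Finset.sum_congr rfl fun i _ => Finset.sum_congr rfl fun j _ => ?_
  rw [Matrix.smul_single, smul_eq_mul, mul_one]

lemma span_sE6 : Submodule.span ℝ
    {M : Matrix (Fin r) (Fin r) ℝ | ∃ i j : Fin r, i ≤ j ∧ M = sE6 i j} = symAll r := by
  apply le_antisymm
  · rw [Submodule.span_le]
    rintro M ⟨i, j, hij, rfl⟩
    exact sE6_mem i j
  · intro M hM
    have hMs : Mᵀ = M := mem_symAll.mp hM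
    have e1 : M = ∑ i, ∑ j, M i j • Matrix.single i j (1:ℝ) := matrix_expand M
    have e2 : M = ∑ i, ∑ j, M i j • Matrix.single j i (1:ℝ) := by
      have t : Mᵀ = ∑ i, ∑ j, M j i • Matrix.single i j (1:ℝ) := matrix_expand Mᵀ
      calc M = Mᵀ := hMs.symm
        _ = ∑ i, ∑ j, M j i • Matrix.single i j (1:ℝ) := t
        _ = ∑ i, ∑ j, M i j • Matrix.single j i (1:ℝ) := Finset.sum_comm
    have key : (2:ℝ) • M = ∑ i, ∑ j, M i j • sE6 i j := by
      have h2 : ((2:ℝ)) • M = M + M := two_smul ℝ M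
      calc (2:ℝ) • M
          = (∑ i, ∑ j, M i j • Matrix.single i j (1:ℝ))
            + (∑ i, ∑ j, M i j • Matrix.single j i (1:ℝ)) := by
            rw [← e1, ← e2, h2]
        _ = ∑ i, ∑ j, M i j • sE6 i j := by
            rw [← Finset.sum_add_distrib]
            refine Finset.sum_congr rfl fun i _ => ?_
            rw [← Finset.sum_add_distrib]
            refine Finset.sum_congr rfl fun j _ => ?_
            rw [sE6, smul_add]
    have hM2 : M = (2:ℝ)⁻¹ • ((2:ℝ) • M) := by rw [smul_smul]; norm_num
    rw [hM2, key]
    refine Submodule.smul_mem _ _ (Submodule.sum_mem _ fun i _ =>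
      Submodule.sum_mem _ fun j _ => Submodule.smul_mem _ _ ?_)
    rcases le_total i j with h | h
    · exact Submodule.subset_span ⟨i, j, h, rfl⟩
    · have : sE6 i j = sE6 j i := by rw [sE6, sE6, add_comm]
      rw [this]
      exact Submodule.subset_span ⟨j, i, h, rfl⟩

/-- left multiplication by a rectangular matrix, as a linear map -/
def mulD (D : Matrix (Fin n ⊕ Fin m) (Fin r) ℝ) :
    Matrix (Fin r) (Fin r) ℝ →ₗ[ℝ] Matrix (Fin n ⊕ Fin m) (Fin r) ℝ where
  toFun N := D * N
  map_add' := Matrix.mul_add D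
  map_smul' c N := by simp [Matrix.mul_smul]

lemma mul_col (D : Matrix (Fin n ⊕ Fin m) (Fin r) ℝ) (M : Matrix (Fin r) (Fin r) ℝ)
    (j : Fin r) : D *ᵥ (fun i => M i j) = fun x => (D * M) x j := by
  funext x
  simp [Matrix.mulVec, dotProduct, Matrix.mul_apply]

/-- kernel of `N ↦ D * N` restricted to symmetric matrices, vs `symW (ker D)`. -/
noncomputable def kerEquiv6 (D : Matrix (Fin n ⊕ Fin m) (Fin r) ℝ) :
    (LinearMap.ker ((mulD D) ∘ₗ (symAll r).subtype)) ≃ₗ[ℝ]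
      symW (LinearMap.ker D.mulVecLin) where
  toFun x := ⟨x.1.1, mem_symAll.mp x.1.2, fun j => by
    have hx : D * x.1.1 = 0 := x.2
    rw [LinearMap.mem_ker, Matrix.mulVecLin_apply, mul_col, hx]
    rfl⟩
  map_add' _ _ := rfl
  map_smul' _ _ := rfl
  invFun y := ⟨⟨y.1, mem_symAll.mpr y.2.1⟩, by
    rw [LinearMap.mem_ker]
    show D * y.1 = 0
    funext x j
    have := y.2.2 j
    rw [LinearMap.mem_ker, Matrix.mulVecLin_apply, mul_col] at this
    have := congrFun this x
    simpa using this⟩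
  left_inv x := by apply Subtype.ext; apply Subtype.ext; rfl
  right_inv y := by apply Subtype.ext; rfl

end Final

/-- If the concatenated matrix `(U; V)` has full rank `rk = min(n+m, r)`,
then the gradients of the entries `Ψ_{i,j}`, `i ≤ j`, span a subspace of `ℝ^{(n+m)r}` of
dimension `rk(2r + 1 - rk)/2`. -/
theorem stmt6 (n m r rk : ℕ) (θ : EuclideanSpace ℝ ((Fin n ⊕ Fin m) × Fin r))
    (C : Matrix (Fin n ⊕ Fin m) (Fin r) ℝ) (hC : ∀ x i, C x i = θ (x, i))
    (hrk : C.rank = rk) (hfull : rk = min (n + m) r) :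
    Module.finrank ℝ (Submodule.span ℝ
        {g : EuclideanSpace ℝ ((Fin n ⊕ Fin m) × Fin r) |
          ∃ i j : Fin r, i ≤ j ∧ g = gradient (Psi6 n m r i j) θ})
      = rk * (2 * r + 1 - rk) / 2 := by
  classical
  set D : Matrix (Fin n ⊕ Fin m) (Fin r) ℝ := Matrix.of fun x k => sgn6 x * C x k with hD
  have hS : {g : EuclideanSpace ℝ ((Fin n ⊕ Fin m) × Fin r) |
      ∃ i j : Fin r, i ≤ j ∧ g = gradient (Psi6 n m r i j) θ}
      = {g | ∃ i j : Fin r, i ≤ j ∧ g = gvec6 θ i j} := by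
    apply Set.ext; intro g
    constructor <;> rintro ⟨i, j, hij, rfl⟩ <;> exact ⟨i, j, hij, by rw [grad6]⟩
  rw [hS]
  -- transfer to matrices
  have htg : ∀ i j : Fin r, toMat6 (gvec6 θ i j) = D * sE6 i j := by
    intro i j
    have hcol : ∀ (a b : Fin r) (x : Fin n ⊕ Fin m) (k : Fin r),
        (∑ l, D x l * Matrix.single a b (1:ℝ) l k)
          = D x a * (if k = b then 1 else 0) := by
      intro a b x k
      by_cases h : k = b
      · subst h
        rw [if_pos rfl, mul_one, Finset.sum_eq_single a]
        · simp [Matrix.single]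
        · intro l _ hl
          simp [Matrix.single, (Ne.symm hl)]
        · simp
      · rw [if_neg h, mul_zero]
        apply Finset.sum_eq_zero
        intro l _
        have : ¬(a = l ∧ b = k) := fun hc => h hc.2.symm
        simp [Matrix.single, this]
    ext x k
    show gvec6 θ i j (x, k) = (D * sE6 i j) x k
    rw [gvec6_apply]
    have : (D * sE6 i j) x k = D x i * (if k = j then 1 else 0)
        + D x j * (if k = i then 1 else 0) := by
      rw [sE6, Matrix.mul_add, Matrix.add_apply, Matrix.mul_apply, Matrix.mul_apply,
        hcol i j x k, hcol j i x k]
    rw [this, hD]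
    simp only [Matrix.of_apply, hC]
    ring
  have himg : (⇑toMat6) '' {g | ∃ i j : Fin r, i ≤ j ∧ g = gvec6 θ i j}
      = (mulD D) '' {M | ∃ i j : Fin r, i ≤ j ∧ M = sE6 i j} := by
    apply Set.ext; intro M
    constructor
    · rintro ⟨g, ⟨i, j, hij, rfl⟩, rfl⟩
      exact ⟨sE6 i j, ⟨i, j, hij, rfl⟩, (htg i j).symm⟩
    · rintro ⟨N, ⟨i, j, hij, rfl⟩, rfl⟩
      exact ⟨gvec6 θ i j, ⟨i, j, hij, rfl⟩, htg i j⟩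
  rw [← LinearEquiv.finrank_map_eq toMat6, Submodule.map_span]
  simp only [LinearEquiv.coe_coe]
  rw [(LinearEquiv.ofEq _ _ (congrArg (Submodule.span ℝ) himg)).finrank_eq]
  rw [← Submodule.map_span, span_sE6]
  have hcomp : Submodule.map (mulD D) (symAll r)
      = LinearMap.range ((mulD D) ∘ₗ (symAll r).subtype) := by
    rw [LinearMap.range_comp, Submodule.range_subtype]
  rw [hcomp]
  have hrn := LinearMap.finrank_range_add_finrank_ker ((mulD D) ∘ₗ (symAll r).subtype)
  rw [finrank_symAll] at hrn
  have hker : Module.finrank ℝ (LinearMap.ker ((mulD D) ∘ₗ (symAll r).subtype))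
      = Module.finrank ℝ (symW (LinearMap.ker D.mulVecLin)) := (kerEquiv6 D).finrank_eq
  rw [finrank_symW] at hker
  have hkerC : LinearMap.ker D.mulVecLin = LinearMap.ker C.mulVecLin := by
    have hDv : ∀ (v : Fin r → ℝ) (x : Fin n ⊕ Fin m),
        (D *ᵥ v) x = sgn6 x * (C *ᵥ v) x := by
      intro v x
      simp [hD, Matrix.mulVec, dotProduct, Finset.mul_sum, mul_assoc]
    have hsgn : ∀ x : Fin n ⊕ Fin m, sgn6 x ≠ 0 := by
      rintro (a | a) <;> simp [sgn6]
    ext v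
    simp only [LinearMap.mem_ker, Matrix.mulVecLin_apply]
    constructor <;> intro h
    · funext x
      have hx := congrFun h x
      rw [hDv v x] at hx
      simp only [Pi.zero_apply] at hx ⊢
      exact (mul_eq_zero.mp hx).resolve_left (hsgn x)
    · funext x
      have hx := congrFun h x
      simp only [Pi.zero_apply] at hx ⊢
      rw [hDv v x, hx, mul_zero]
  have hrankC := LinearMap.finrank_range_add_finrank_ker C.mulVecLin
  have hr2 : Module.finrank ℝ (Fin r → ℝ) = r := by
    rw [Module.finrank_pi]
    exact Fintype.card_fin r
  rw [hr2] at hrankC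
  have hrangeC : Module.finrank ℝ (LinearMap.range C.mulVecLin) = rk := hrk
  have hwid : Module.finrank ℝ (LinearMap.ker D.mulVecLin) = r - rk := by
    rw [hkerC]; omega
  rw [hwid] at hker
  have hrkr : rk ≤ r := by
    rw [hfull]; exact min_le_right _ _
  have harith := arith6 r rk hrkr
  omega
end

section
/- Let C ∈ ℝ^{(n+m)×r} with n+m > r have full rank r, and let J = diag(I_n, −I_m). Consider the linear map Γ : M ↦ J M C defined on the space of skew-symmetric (n+m)×(n+m) matrices. Then the kernel of Γ, i.e. {M skew-symmetric : M C = 0}, has dimension (n+m−r)(n+m−r−1)/2, and hence rank Γ = (n+m)r − r(r+1)/2. -/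
open Matrix

/-- `J = diag(I_n, -I_m)`. -/
def J10 (n m : ℕ) : Matrix (Fin n ⊕ Fin m) (Fin n ⊕ Fin m) ℝ :=
  Matrix.fromBlocks 1 0 0 (-1)

/-- The linear map `M ↦ Mᵀ + M`, whose kernel is the space of skew-symmetric matrices. -/
def transAdd10 (n m : ℕ) :
    Matrix (Fin n ⊕ Fin m) (Fin n ⊕ Fin m) ℝ →ₗ[ℝ] Matrix (Fin n ⊕ Fin m) (Fin n ⊕ Fin m) ℝ where
  toFun M := Mᵀ + M
  map_add' M N := by simp [Matrix.transpose_add]; abel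
  map_smul' a M := by simp [Matrix.transpose_smul]

/-- The linear map `M ↦ M C`. -/
def mulRight10 (n m r : ℕ) (C : Matrix (Fin n ⊕ Fin m) (Fin r) ℝ) :
    Matrix (Fin n ⊕ Fin m) (Fin n ⊕ Fin m) ℝ →ₗ[ℝ] Matrix (Fin n ⊕ Fin m) (Fin r) ℝ where
  toFun M := M * C
  map_add' M N := Matrix.add_mul M N C
  map_smul' a M := by simp [Matrix.smul_mul]

/-- The linear map `Γ : M ↦ J M C`. -/
def gamma10 (n m r : ℕ) (C : Matrix (Fin n ⊕ Fin m) (Fin r) ℝ) :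
    Matrix (Fin n ⊕ Fin m) (Fin n ⊕ Fin m) ℝ →ₗ[ℝ] Matrix (Fin n ⊕ Fin m) (Fin r) ℝ where
  toFun M := J10 n m * M * C
  map_add' M N := by simp [Matrix.mul_add, Matrix.add_mul]
  map_smul' a M := by simp [Matrix.mul_smul, Matrix.smul_mul]

/-!
Extend the columns of `C` to a basis of `ℝ^{n+m}` and let `P` be the invertible matrix whose
columns are this basis. The congruence `M ↦ Pᵀ M P` preserves skew-symmetry and turns the condition
`M C = 0` into the vanishing of the first `r` columns. By skew-symmetry the first `r` rows then
vanish too, so what remains is an arbitrary skew-symmetric `(n+m-r) × (n+m-r)` block.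
Since `J² = 1`, `Γ` has the same kernel on skew-symmetric matrices, and the rank follows by
rank–nullity from `dim Skew(n+m) = (n+m choose 2)`.
-/

open Module

section

variable {K : Type*} [Field K] {ι κ ρ α : Type*}

variable (K) in
def skewMatrices (ι : Type*) : Submodule K (Matrix ι ι K) where
  carrier := {M | Mᵀ = -M}
  add_mem' {M N} hM hN := by simp_all [add_comm]
  zero_mem' := by simp
  smul_mem' c M hM := by simp_all

theorem mem_skewMatrices {M : Matrix ι ι K} : M ∈ skewMatrices K ι ↔ Mᵀ = -M := Iff.rfl

theorem card_pairs_lt_fin (k : ℕ) :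
    Fintype.card {p : Fin k × Fin k // p.1 < p.2} = k.choose 2 := by
  let e : {p : Fin k × Fin k // p.1 < p.2} ≃ Σ j : Fin k, Fin j :=
    { toFun p := ⟨p.1.2, ⟨p.1.1, p.2⟩⟩
      invFun q := ⟨(⟨q.2, q.2.2.trans q.1.2⟩, q.1), q.2.2⟩ }
  rw [Fintype.card_congr e, Fintype.card_sigma, Nat.choose_two_right]
  simp [Fin.sum_univ_eq_sum_range (fun i => i) k, Finset.sum_range_id]

theorem card_pairs_lt [Fintype ι] [LinearOrder ι] :
    Fintype.card {p : ι × ι // p.1 < p.2} = (Fintype.card ι).choose 2 := by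
  let e := Fintype.orderIsoFinOfCardEq ι rfl
  rw [← card_pairs_lt_fin, Fintype.card_congr ((e.toEquiv.prodCongr e.toEquiv).subtypeEquiv
    (q := fun q => q.1 < q.2) fun _ => e.lt_iff_lt.symm)]

theorem eq_zero_of_eq_neg [NeZero (2 : K)] {a : K} (h : a = -a) : a = 0 := by
  simpa [← two_mul, two_ne_zero] using eq_neg_iff_add_eq_zero.mp h

def strictUpper [LinearOrder ι] (f : {p : ι × ι // p.1 < p.2} → K) : Matrix ι ι K :=
  of fun i j => if h : i < j then f ⟨(i, j), h⟩ else 0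

def skewMatricesEquivPairs [NeZero (2 : K)] [LinearOrder ι] :
    skewMatrices K ι ≃ₗ[K] ({p : ι × ι // p.1 < p.2} → K) where
  toFun M p := M.1 p.1.1 p.1.2
  map_add' _ _ := rfl
  map_smul' _ _ := rfl
  invFun f := ⟨strictUpper f - (strictUpper f)ᵀ, by simp [mem_skewMatrices]⟩
  left_inv M := by
    have hM := M.2
    rw [mem_skewMatrices] at hM
    ext i j
    rcases lt_trichotomy i j with h | rfl | h
    · simp [strictUpper, h, h.not_gt]
    · simpa [strictUpper] using (eq_zero_of_eq_neg (congrFun₂ hM i i)).symm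
    · simpa [strictUpper, h, h.not_gt] using (congrFun₂ hM j i).symm
  right_inv f := by
    ext p
    simp [strictUpper, p.2, p.2.not_gt]

theorem finrank_skewMatrices [NeZero (2 : K)] [Fintype ι] :
    finrank K (skewMatrices K ι) = (Fintype.card ι).choose 2 := by
  classical
  let _ : LinearOrder ι := LinearOrder.lift' _ (Fintype.equivFin ι).injective
  rw [skewMatricesEquivPairs.finrank_eq, finrank_fintype_fun_eq_card, card_pairs_lt]

def skewAnnihilator [Fintype ι] (C : Matrix ι ρ K) : Submodule K (Matrix ι ι K) where
  carrier := {M | Mᵀ = -M ∧ M * C = 0}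
  add_mem' {M N} hM hN := ⟨by simp [hM.1, hN.1, add_comm], by simp [Matrix.add_mul, hM.2, hN.2]⟩
  zero_mem' := by simp
  smul_mem' c M hM := ⟨by simp [hM.1], by simp [Matrix.smul_mul, hM.2]⟩

def congruenceMap [Fintype ι] (P : Matrix ι κ K) : Matrix ι ι K →ₗ[K] Matrix κ κ K where
  toFun M := Pᵀ * M * P
  map_add' M N := by simp [Matrix.mul_add, Matrix.add_mul]
  map_smul' c M := by simp

theorem congruenceMap_mem_skewAnnihilator [Fintype ι] [Fintype κ] {P : Matrix ι κ K}
    {C : Matrix ι ρ K} {X : Matrix κ ρ K} (hPX : P * X = C) {M : Matrix ι ι K}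
    (hM : M ∈ skewAnnihilator C) : congruenceMap P M ∈ skewAnnihilator X := by
  obtain ⟨hskew, hMC⟩ := hM
  refine ⟨?_, ?_⟩
  · simp [congruenceMap, transpose_mul, hskew, Matrix.mul_assoc]
  · simp [congruenceMap, Matrix.mul_assoc, hPX, hMC]

theorem congruenceMap_congruenceMap [Fintype ι] [Fintype κ] [DecidableEq ι] {P : Matrix ι κ K}
    {Q : Matrix κ ι K} (hPQ : P * Q = 1) (M : Matrix ι ι K) :
    congruenceMap Q (congruenceMap P M) = M := by
  simp only [congruenceMap, LinearMap.coe_mk, AddHom.coe_mk]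
  rw [← Matrix.mul_assoc, ← Matrix.mul_assoc, ← transpose_mul, Matrix.mul_assoc _ P Q, hPQ]
  simp

theorem finrank_skewAnnihilator_congr [Fintype ι] [Fintype κ] [DecidableEq ι] [DecidableEq κ]
    {P : Matrix ι κ K} {Q : Matrix κ ι K} (hPQ : P * Q = 1) (hQP : Q * P = 1)
    {C : Matrix ι ρ K} {X : Matrix κ ρ K} (hPX : P * X = C) :
    finrank K (skewAnnihilator C) = finrank K (skewAnnihilator X) := by
  have hQC : Q * C = X := by rw [← hPX, ← Matrix.mul_assoc, hQP, Matrix.one_mul]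
  refine LinearEquiv.finrank_eq (LinearEquiv.ofLinearMap (σ₁₂ := RingHom.id K)
    ((congruenceMap P).restrict fun _ => congruenceMap_mem_skewAnnihilator hPX)
    ((congruenceMap Q).restrict fun _ => congruenceMap_mem_skewAnnihilator hQC) ?_ ?_)
  · ext N : 2
    exact congruenceMap_congruenceMap hQP N
  · ext M : 2
    exact congruenceMap_congruenceMap hPQ M

theorem mul_fromRows_one_zero [Fintype κ] [DecidableEq κ] [Fintype α] (N : Matrix ι (κ ⊕ α) K) :
    N * fromRows (1 : Matrix κ κ K) (0 : Matrix α κ K) = N.submatrix id Sum.inl := by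
  ext i a
  simp [Matrix.mul_apply, Fintype.sum_sum_type, Matrix.one_apply]

def skewAnnihilatorFromRowsEquiv [Fintype κ] [DecidableEq κ] [Fintype α] :
    skewAnnihilator (fromRows (1 : Matrix κ κ K) (0 : Matrix α κ K)) ≃ₗ[K] skewMatrices K α where
  toFun N := ⟨N.1.toBlocks₂₂, by
    ext i j
    simpa [toBlocks₂₂] using congrFun₂ N.2.1 (Sum.inr i) (Sum.inr j)⟩
  map_add' _ _ := rfl
  map_smul' _ _ := rfl
  invFun D := ⟨fromBlocks 0 0 0 D, by
    refine ⟨?_, ?_⟩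
    · rw [fromBlocks_transpose, D.2, fromBlocks_neg]
      simp
    · rw [mul_fromRows_one_zero]
      ext (i | i) a <;> rfl⟩
  left_inv N := by
    obtain ⟨hskew, hcols⟩ := N.2
    rw [mul_fromRows_one_zero] at hcols
    have hcol (x) (a : κ) : N.1 x (Sum.inl a) = 0 := congrFun₂ hcols x a
    ext (i | i) (j | j)
    · exact (hcol _ _).symm
    · simpa [hcol, eq_comm] using congrFun₂ hskew (Sum.inr j) (Sum.inl i)
    · exact (hcol _ _).symm
    · rfl
  right_inv D := rfl

theorem finrank_skewAnnihilator_fromRows [NeZero (2 : K)] [Fintype κ] [DecidableEq κ]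
    [Fintype α] :
    finrank K (skewAnnihilator (fromRows (1 : Matrix κ κ K) (0 : Matrix α κ K))) =
      (Fintype.card α).choose 2 := by
  rw [skewAnnihilatorFromRowsEquiv.finrank_eq, finrank_skewMatrices]

theorem Module.Basis.sumExtend_apply_inl {V : Type*} [AddCommGroup V] [Module K V] {v : ρ → V}
    (hv : LinearIndependent K v) (a : ρ) : Basis.sumExtend hv (Sum.inl a) = v a := by
  simp [Basis.sumExtend]
  rfl

theorem finrank_skewAnnihilator [NeZero (2 : K)] [Fintype ι] [Fintype ρ] {C : Matrix ι ρ K}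
    (hC : LinearIndependent K C.col) :
    finrank K (skewAnnihilator C) = (Fintype.card ι - Fintype.card ρ).choose 2 := by
  classical
  let b := Basis.sumExtend hC
  have : Finite (ρ ⊕ Basis.sumExtendIndex hC) := Module.Finite.finite_basis b
  have : Finite (Basis.sumExtendIndex hC) := Finite.of_injective _ (Sum.inr_injective (α := ρ))
  let _ := Fintype.ofFinite (Basis.sumExtendIndex hC)
  have hcard : Fintype.card ρ + Fintype.card (Basis.sumExtendIndex hC) = Fintype.card ι := by
    rw [← Fintype.card_sum, ← finrank_eq_card_basis b, finrank_fintype_fun_eq_card]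
  let P := (Pi.basisFun K ι).toMatrix b
  have hPX : P * fromRows (1 : Matrix ρ ρ K) (0 : Matrix (Basis.sumExtendIndex hC) ρ K) = C := by
    ext i a
    simp [mul_fromRows_one_zero, P, Basis.toMatrix_apply, Basis.sumExtend_apply_inl, b]
  rw [finrank_skewAnnihilator_congr (Basis.toMatrix_mul_toMatrix_flip _ _)
    (Basis.toMatrix_mul_toMatrix_flip _ _) hPX, finrank_skewAnnihilator_fromRows, ← hcard,
    Nat.add_sub_cancel_left]

theorem Matrix.linearIndependent_col_of_rank_eq [Fintype ρ] {C : Matrix ι ρ K}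
    (h : C.rank = Fintype.card ρ) : LinearIndependent K C.col := by
  rw [linearIndependent_iff_card_eq_finrank_span, Set.finrank, ← rank_eq_finrank_span_cols, h]

theorem Submodule.finrank_map_add_finrank_inf_ker {V W : Type*} [AddCommGroup V] [Module K V]
    [FiniteDimensional K V] [AddCommGroup W] [Module K W] (f : V →ₗ[K] W) (p : Submodule K V) :
    finrank K (p.map f) + finrank K ↥(p ⊓ LinearMap.ker f) = finrank K p := by
  rw [← LinearMap.range_domRestrict, ← Submodule.map_comap_subtype,
    Submodule.finrank_map_subtype_eq, ← LinearMap.ker_domRestrict]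
  exact LinearMap.finrank_range_add_finrank_ker _

end

theorem Nat.choose_two_eq_choose_two_sub_add {N r : ℕ} (h : r ≤ N) :
    N.choose 2 = (N - r).choose 2 + (N * r - r * (r + 1) / 2) := by
  obtain ⟨s, rfl⟩ := Nat.exists_eq_add_of_le h
  have hadd : (r + s).choose 2 = r.choose 2 + r * s + s.choose 2 := by
    simp [Nat.add_choose_eq, Finset.Nat.sum_antidiagonal_succ]
    ring
  have hsucc : r * (r + 1) / 2 = r.choose 2 + r := by
    have h2 := Nat.choose_two_right (r + 1)
    rw [Nat.add_sub_cancel, Nat.choose_succ_succ', Nat.choose_one_right] at h2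
    rw [mul_comm, ← h2, add_comm]
  have hsq : 2 * r.choose 2 + r = r * r := by
    rw [Nat.choose_two_right, Nat.mul_div_cancel' (Nat.even_mul_pred_self r).two_dvd]
    cases r <;> simp; ring
  rw [Nat.add_sub_cancel_left, hadd, hsucc, add_mul, mul_comm s r]
  omega

theorem J10_mul_self (n m : ℕ) : J10 n m * J10 n m = 1 := by
  simp [J10, fromBlocks_multiply, fromBlocks_one]

theorem ker_transAdd10 (n m : ℕ) : LinearMap.ker (transAdd10 n m) = skewMatrices ℝ _ := by
  ext M
  exact add_eq_zero_iff_eq_neg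

theorem ker_gamma10 (n m r : ℕ) (C : Matrix (Fin n ⊕ Fin m) (Fin r) ℝ) :
    LinearMap.ker (gamma10 n m r C) = LinearMap.ker (mulRight10 n m r C) := by
  ext M
  simp only [LinearMap.mem_ker, gamma10, mulRight10, LinearMap.coe_mk, AddHom.coe_mk]
  constructor
  · intro h
    simpa [← Matrix.mul_assoc, J10_mul_self] using congrArg (J10 n m * ·) h
  · intro h
    rw [Matrix.mul_assoc, h, Matrix.mul_zero]

theorem stmt10_general (n m r : ℕ) (C : Matrix (Fin n ⊕ Fin m) (Fin r) ℝ)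
    (hrank : C.rank = r) :
    Module.finrank ℝ
        ↥(LinearMap.ker (transAdd10 n m) ⊓ LinearMap.ker (mulRight10 n m r C))
      = (n + m - r) * (n + m - r - 1) / 2 ∧
    Module.finrank ℝ
        ↥(Submodule.map (gamma10 n m r C) (LinearMap.ker (transAdd10 n m)))
      = (n + m) * r - r * (r + 1) / 2 := by
  have hr : r ≤ n + m := by simpa [hrank] using C.rank_le_card_height
  have hC := linearIndependent_col_of_rank_eq (by rw [hrank, Fintype.card_fin])
  have hkernel : LinearMap.ker (transAdd10 n m) ⊓ LinearMap.ker (mulRight10 n m r C) =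
      skewAnnihilator C := by
    ext M
    simp [ker_transAdd10, mem_skewMatrices, mulRight10, skewAnnihilator]
  have hdim : finrank ℝ (skewAnnihilator C) = (n + m - r).choose 2 := by
    simpa using finrank_skewAnnihilator hC
  refine ⟨by rw [hkernel, hdim, Nat.choose_two_right], ?_⟩
  have hskew : finrank ℝ (LinearMap.ker (transAdd10 n m)) = (n + m).choose 2 := by
    rw [ker_transAdd10, finrank_skewMatrices, Fintype.card_sum, Fintype.card_fin, Fintype.card_fin]
  have hrank_nullity := Submodule.finrank_map_add_finrank_inf_ker (gamma10 n m r C)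
    (LinearMap.ker (transAdd10 n m))
  rw [ker_gamma10, hkernel, hdim, hskew, Nat.choose_two_eq_choose_two_sub_add hr] at hrank_nullity
  omega

/-- if `C ∈ ℝ^{(n+m)×r}` with `n+m > r` has full rank `r`, the kernel
`{M skew-symmetric : M C = 0}` of `Γ : M ↦ J M C` (restricted to skew-symmetric matrices)
has dimension `(n+m-r)(n+m-r-1)/2`, and hence `rank Γ = (n+m)r - r(r+1)/2`. -/
theorem stmt10 (n m r : ℕ) (hr : r < n + m) (C : Matrix (Fin n ⊕ Fin m) (Fin r) ℝ)
    (hrank : C.rank = r) :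
    Module.finrank ℝ
        ↥(LinearMap.ker (transAdd10 n m) ⊓ LinearMap.ker (mulRight10 n m r C))
      = (n + m - r) * (n + m - r - 1) / 2 ∧
    Module.finrank ℝ
        ↥(Submodule.map (gamma10 n m r C) (LinearMap.ker (transAdd10 n m)))
      = (n + m) * r - r * (r + 1) / 2 :=
  stmt10_general n m r C hrank
end

section
/- Let ψ : (ℝⁿ∖{0}) × (ℝᵐ∖{0}) → ℝ^{n×m}, ψ(u,v) = uvᵀ, with component functions ψ_{i,j}(u,v) = uᵢvⱼ. Then for all indices (i,j) and (k,l) and all (u,v) in the domain, the Lie bracket [∇ψ_{i,j}, ∇ψ_{k,l}](u,v) = ∂²ψ_{i,j}(u,v)·∇ψ_{k,l}(u,v) − ∂²ψ_{k,l}(u,v)·∇ψ_{i,j}(u,v) lies in span{∇ψ_{a,b}(u,v) : 1 ≤ a ≤ n, 1 ≤ b ≤ m}. -/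
/-- The component `ψ_{i,j}(u,v) = uᵢ vⱼ` of `ψ(u,v) = uvᵀ`, on `ℝ^{n+m}`. -/
noncomputable def psi14 (n m : ℕ) (i : Fin n) (j : Fin m)
    (θ : EuclideanSpace ℝ (Fin n ⊕ Fin m)) : ℝ :=
  θ (Sum.inl i) * θ (Sum.inr j)

/-!
The Hessian of the bilinear form `ψ_{i,j}` is the constant symmetric operator
`H_{i,j} = E_{n+j,i} + E_{i,n+j}`, and `∇ψ_{i,j}(θ) = H_{i,j} θ`. Hence the bracket of two gradient
fields is the commutator `[H_{i,j}, H_{k,l}] θ`, a combination of the infinitesimal rotations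
`θ_k e_i - θ_i e_k` (when `j = l`) and `θ_l e_j - θ_j e_l` (when `i = k`). On `u ≠ 0, v ≠ 0` these
are themselves gradients up to a nonzero factor: for `v_b ≠ 0`,
`u_k ∇ψ_{i,b} - u_i ∇ψ_{k,b} = v_b (u_k e_i - u_i e_k)`, and symmetrically in `v`.
-/

open EuclideanSpace

noncomputable def infinitesimalRotation {ι : Type*} [DecidableEq ι] (θ : EuclideanSpace ℝ ι)
    (a b : ι) : EuclideanSpace ℝ ι :=
  θ a • single b 1 - θ b • single a 1

section

variable {n m : ℕ}

noncomputable def psi14Hessian (i : Fin n) (j : Fin m) :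
    EuclideanSpace ℝ (Fin n ⊕ Fin m) →L[ℝ] EuclideanSpace ℝ (Fin n ⊕ Fin m) :=
  (proj (Sum.inr j)).smulRight (single (Sum.inl i) 1)
    + (proj (Sum.inl i)).smulRight (single (Sum.inr j) 1)

theorem psi14Hessian_apply (i : Fin n) (j : Fin m) (w : EuclideanSpace ℝ (Fin n ⊕ Fin m)) :
    psi14Hessian i j w
      = w (Sum.inr j) • single (Sum.inl i) 1 + w (Sum.inl i) • single (Sum.inr j) 1 :=
  rfl

theorem hasGradientAt_psi14 (i : Fin n) (j : Fin m) (θ : EuclideanSpace ℝ (Fin n ⊕ Fin m)) :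
    HasGradientAt (psi14 n m i j) (psi14Hessian i j θ) θ := by
  rw [hasGradientAt_iff_hasFDerivAt]
  have hu := (proj (𝕜 := ℝ) (Sum.inl (β := Fin m) i)).hasFDerivAt (x := θ)
  have hv := (proj (𝕜 := ℝ) (Sum.inr (α := Fin n) j)).hasFDerivAt (x := θ)
  refine (hu.mul hv).congr_fderiv ?_
  ext w
  simp [psi14Hessian_apply, inner_single_left]
  ring

theorem gradient_psi14 (i : Fin n) (j : Fin m) :
    gradient (psi14 n m i j) = psi14Hessian i j :=
  funext fun θ => (hasGradientAt_psi14 i j θ).gradient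

theorem fderiv_gradient_psi14 (i : Fin n) (j : Fin m) (θ : EuclideanSpace ℝ (Fin n ⊕ Fin m)) :
    fderiv ℝ (fun w => gradient (psi14 n m i j) w) θ = psi14Hessian i j := by
  simp only [gradient_psi14]
  exact (psi14Hessian i j).fderiv

theorem psi14Hessian_apply_psi14Hessian (i k : Fin n) (j l : Fin m)
    (θ : EuclideanSpace ℝ (Fin n ⊕ Fin m)) :
    psi14Hessian i j (psi14Hessian k l θ)
      = (if j = l then θ (Sum.inl k) else 0) • single (Sum.inl i) 1
        + (if i = k then θ (Sum.inr l) else 0) • single (Sum.inr j) 1 := by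
  simp [psi14Hessian_apply, PiLp.single_apply, eq_comm]

theorem psi14Hessian_commutator_apply (i k : Fin n) (j l : Fin m)
    (θ : EuclideanSpace ℝ (Fin n ⊕ Fin m)) :
    psi14Hessian i j (psi14Hessian k l θ) - psi14Hessian k l (psi14Hessian i j θ)
      = (if j = l then infinitesimalRotation θ (Sum.inl k) (Sum.inl i) else 0)
        + (if i = k then infinitesimalRotation θ (Sum.inr l) (Sum.inr j) else 0) := by
  simp only [psi14Hessian_apply_psi14Hessian, infinitesimalRotation]
  split_ifs <;> subst_vars <;> simp_all

theorem infinitesimalRotation_inl_mem_span {θ : EuclideanSpace ℝ (Fin n ⊕ Fin m)} {b : Fin m}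
    (hb : θ (Sum.inr b) ≠ 0) (i k : Fin n) :
    infinitesimalRotation θ (Sum.inl k) (Sum.inl i)
      ∈ Submodule.span ℝ (Set.range fun p : Fin n × Fin m => psi14Hessian p.1 p.2 θ) := by
  have key : θ (Sum.inl k) • psi14Hessian i b θ - θ (Sum.inl i) • psi14Hessian k b θ
      = θ (Sum.inr b) • infinitesimalRotation θ (Sum.inl k) (Sum.inl i) := by
    simp only [psi14Hessian_apply, infinitesimalRotation]
    module
  rw [← Submodule.smul_mem_iff _ hb, ← key]
  exact sub_mem (Submodule.smul_mem _ _ (Submodule.subset_span ⟨(i, b), rfl⟩))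
    (Submodule.smul_mem _ _ (Submodule.subset_span ⟨(k, b), rfl⟩))

theorem infinitesimalRotation_inr_mem_span {θ : EuclideanSpace ℝ (Fin n ⊕ Fin m)} {a : Fin n}
    (ha : θ (Sum.inl a) ≠ 0) (j l : Fin m) :
    infinitesimalRotation θ (Sum.inr l) (Sum.inr j)
      ∈ Submodule.span ℝ (Set.range fun p : Fin n × Fin m => psi14Hessian p.1 p.2 θ) := by
  have key : θ (Sum.inr l) • psi14Hessian a j θ - θ (Sum.inr j) • psi14Hessian a l θ
      = θ (Sum.inl a) • infinitesimalRotation θ (Sum.inr l) (Sum.inr j) := by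
    simp only [psi14Hessian_apply, infinitesimalRotation]
    module
  rw [← Submodule.smul_mem_iff _ ha, ← key]
  exact sub_mem (Submodule.smul_mem _ _ (Submodule.subset_span ⟨(a, j), rfl⟩))
    (Submodule.smul_mem _ _ (Submodule.subset_span ⟨(a, l), rfl⟩))

end

/-- on the domain `u ≠ 0, v ≠ 0`, the Lie bracket of any two gradient fields
`∇ψ_{i,j}, ∇ψ_{k,l}` lies in the span of all the gradients `∇ψ_{a,b}` (involutivity). -/
theorem stmt14 (n m : ℕ) (θ : EuclideanSpace ℝ (Fin n ⊕ Fin m))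
    (hu : ∃ i, θ (Sum.inl i) ≠ 0) (hv : ∃ j, θ (Sum.inr j) ≠ 0)
    (i k : Fin n) (j l : Fin m) :
    fderiv ℝ (fun w => gradient (psi14 n m i j) w) θ (gradient (psi14 n m k l) θ)
      - fderiv ℝ (fun w => gradient (psi14 n m k l) w) θ (gradient (psi14 n m i j) θ)
    ∈ Submodule.span ℝ
        (Set.range fun p : Fin n × Fin m => gradient (psi14 n m p.1 p.2) θ) := by
  obtain ⟨a, ha⟩ := hu
  obtain ⟨b, hb⟩ := hv
  rw [fderiv_gradient_psi14, fderiv_gradient_psi14]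
  simp only [gradient_psi14]
  rw [psi14Hessian_commutator_apply]
  refine add_mem ?_ ?_ <;> split_ifs
  · exact infinitesimalRotation_inl_mem_span hb i k
  · exact zero_mem _
  · exact infinitesimalRotation_inr_mem_span ha j l
  · exact zero_mem _
end
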